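/- arXiv:0803.2213 — 4 statements merged into one kernel-verified Lean document; each statement's English description precedes it below -/
import Mathlib

section
/- For every vertex x of a finite simple graph, the equivalence class [x]_⊥ = {z ∈ X : z^⊥ = x^⊥} equals cl({x}) minus the union of the sets cl({y}) over all vertices y with cl({y}) strictly contained in cl({x}). In particular, if x is minimal in the sense that cl({y}) ⊆ cl({x}) implies cl({y}) = cl({x}), then [x]_⊥ = cl({x}). -/
def perp {V : Type*} (G : SimpleGraph V) (Y : Set V) : Set V :=
  {u | ∀ y ∈ Y, u = y ∨ G.Adj u y}

def cl {V : Type*} (G : SimpleGraph V) (Y : Set V) : Set V :=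
  perp G (perp G Y)

/-- The class `[x]_⊥` of vertices with the same orthogonal complement as `x`. -/
def clsPerp {V : Type*} (G : SimpleGraph V) (x : V) : Set V :=
  {z | perp G {z} = perp G {x}}

/-! Since `cl G {x} = {z | x^⊥ ⊆ z^⊥}`, we have `z ∈ cl G {x} ↔ cl G {z} ⊆ cl G {x}`, and
`[x]_⊥` is the set of `z` with `cl G {z} = cl G {x}`. A `z ∈ cl G {x}` outside that class has
`cl G {z} ⊂ cl G {x}` and so lies in the removed union, while a `z` in the class lies in no
strictly smaller `cl G {y}`. -/

section

variable {V : Type*} (G : SimpleGraph V)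

lemma perp_anti {Y Z : Set V} (h : Y ⊆ Z) : perp G Z ⊆ perp G Y :=
  fun _ hu y hy => hu y (h hy)

lemma mem_cl_iff {Y : Set V} {z : V} : z ∈ cl G Y ↔ perp G Y ⊆ perp G {z} := by
  simp only [cl, perp, Set.subset_def, Set.mem_ofPred_eq, Set.mem_singleton_iff, forall_eq]
  exact forall₂_congr fun u _ => by rw [eq_comm, G.adj_comm]

lemma subset_cl (Y : Set V) : Y ⊆ cl G Y :=
  fun _ hz => (mem_cl_iff G).2 (perp_anti G (Set.singleton_subset_iff.2 hz))

lemma cl_singleton_subset_iff {x y : V} : cl G {y} ⊆ cl G {x} ↔ perp G {x} ⊆ perp G {y} :=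
  ⟨fun h => (mem_cl_iff G).1 (h (subset_cl G {y} rfl)), perp_anti G⟩

lemma mem_cl_singleton_iff {x z : V} : z ∈ cl G {x} ↔ cl G {z} ⊆ cl G {x} :=
  (mem_cl_iff G).trans (cl_singleton_subset_iff G).symm

lemma mem_clsPerp_iff {x z : V} : z ∈ clsPerp G x ↔ cl G {z} = cl G {x} := by
  simp only [clsPerp, Set.mem_ofPred_eq, Set.Subset.antisymm_iff, cl_singleton_subset_iff]
  exact and_comm

end

theorem clsPerp_eq_cl_sdiff_general {V : Type*} (G : SimpleGraph V) (x : V) :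
    clsPerp G x = cl G {x} \ ⋃ y ∈ {y : V | cl G {y} ⊂ cl G {x}}, cl G {y} ∧
    ((∀ y : V, cl G {y} ⊆ cl G {x} → cl G {y} = cl G {x}) →
      clsPerp G x = cl G {x}) := by
  constructor
  · ext z
    simp only [mem_clsPerp_iff, Set.mem_sdiff, Set.mem_iUnion, Set.mem_ofPred_eq, exists_prop,
      not_exists, not_and, mem_cl_singleton_iff]
    constructor
    · intro hzx
      exact ⟨hzx.le, fun y hyx hzy => hyx.not_subset (hzx ▸ hzy)⟩
    · rintro ⟨hzx, hmin⟩
      by_contra hne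
      exact hmin z (hzx.ssubset_of_ne hne) le_rfl
  · intro hmin
    ext z
    rw [mem_clsPerp_iff, mem_cl_singleton_iff]
    exact ⟨Eq.subset, hmin z⟩

theorem clsPerp_eq_cl_sdiff {V : Type*} [Fintype V] (G : SimpleGraph V) (x : V) :
    clsPerp G x = cl G {x} \ ⋃ y ∈ {y : V | cl G {y} ⊂ cl G {x}}, cl G {y} ∧
    ((∀ y : V, cl G {y} ⊆ cl G {x} → cl G {y} = cl G {x}) →
      clsPerp G x = cl G {x}) :=
  clsPerp_eq_cl_sdiff_general G x
end

section
/- Let J, Tr_⊥ and V_⊥ be as defined. Then each element of J, each element of Tr_⊥, and each element of V_⊥ stabilizes G(Y) for every closed set Y; i.e., J, V_⊥ ⊆ St(L) and Tr_⊥ ⊆ St(L). -/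
/-- Relators of the right-angled Artin group on the graph `G`. -/
def raagRels {V : Type*} (G : SimpleGraph V) : Set (FreeGroup V) :=
  {r | ∃ x y : V, G.Adj x y ∧
    r = FreeGroup.of x * FreeGroup.of y * (FreeGroup.of x)⁻¹ * (FreeGroup.of y)⁻¹}

/-- The right-angled Artin group (partially commutative group) on the graph `G`. -/
abbrev Raag {V : Type*} (G : SimpleGraph V) := PresentedGroup (raagRels G)

/-- The generator of `Raag G` corresponding to a vertex. -/
def gen {V : Type*} (G : SimpleGraph V) (x : V) : Raag G := PresentedGroup.of x

/-- The canonical parabolic subgroup `G(Y)` generated by a subset of vertices. -/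
def parab {V : Type*} (G : SimpleGraph V) (Y : Set V) : Subgroup (Raag G) :=
  Subgroup.closure (gen G '' Y)

/-- The stabiliser `St(L)` of all parabolic subgroups of closed sets. -/
def StL {V : Type*} (G : SimpleGraph V) : Set (MulAut (Raag G)) :=
  {φ | ∀ Y : Set V, Y = cl G Y → (parab G Y).map φ.toMonoidHom = parab G Y}

/-- Automorphisms inverting some generators and fixing the rest. -/
def Jset {V : Type*} (G : SimpleGraph V) : Set (MulAut (Raag G)) :=
  {φ | ∀ x : V, φ (gen G x) = gen G x ∨ φ (gen G x) = (gen G x)⁻¹}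

/-- The transvections `tr_{x,y}` with `x^⊥ ⊊ y^⊥`. -/
def TrPerp {V : Type*} (G : SimpleGraph V) : Set (MulAut (Raag G)) :=
  {φ | ∃ x y : V, x ≠ y ∧ perp G {x} ⊂ perp G {y} ∧
    φ (gen G x) = gen G x * gen G y ∧ ∀ z : V, z ≠ x → φ (gen G z) = gen G z}

/-- Automorphisms acting within each class `[x]_⊥` (and fixing generators whose
class is a singleton): the subgroup `V_⊥`. -/
def VPerp {V : Type*} (G : SimpleGraph V) : Set (MulAut (Raag G)) :=
  {φ | ∀ x : V, φ (gen G x) ∈ parab G (clsPerp G x) ∧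
    (clsPerp G x = {x} → φ (gen G x) = gen G x)}

/-!
Both `J` and `V_⊥` send each generator `x` into `G([x]_⊥)`, and a closed set is a union of
`⊥`-classes. So such a `φ` maps `G(Y)` into `G(Y)` and `G(Yᶜ)` into `G(Yᶜ)`; it therefore commutes
with the retraction `ρ_Y` killing the generators outside `Y`, and `φ⁻¹ x = ρ_Y (φ⁻¹ x) ∈ G(Y)` for
`x ∈ Y`. A transvection `tr_{x,y}` and its inverse `x ↦ x y⁻¹` preserve `G(Y)` directly, since
`x ∈ Y` forces `y ∈ Y`.
-/

namespace Raag

variable {V : Type*} {G : SimpleGraph V}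

theorem mem_perp_singleton {u x : V} : u ∈ perp G {x} ↔ u = x ∨ G.Adj u x := by
  simp [perp]

theorem mem_of_perp_singleton_subset {Y : Set V} (hY : Y = cl G Y) {x y : V} (hx : x ∈ Y)
    (hxy : perp G {x} ⊆ perp G {y}) : y ∈ Y := by
  rw [hY]
  intro u hu
  rcases mem_perp_singleton.1 (hxy (mem_perp_singleton.2 (hu x hx))) with rfl | h
  · exact Or.inl rfl
  · exact Or.inr h.symm

theorem self_mem_clsPerp (G : SimpleGraph V) (x : V) : x ∈ clsPerp G x := rfl

theorem clsPerp_subset {Y : Set V} (hY : Y = cl G Y) {x : V} (hx : x ∈ Y) :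
    clsPerp G x ⊆ Y :=
  fun _ hz => mem_of_perp_singleton_subset hY hx (Eq.ge hz)

theorem clsPerp_subset_compl {Y : Set V} (hY : Y = cl G Y) {x : V} (hx : x ∉ Y) :
    clsPerp G x ⊆ Yᶜ :=
  fun _ hz hzY => hx (mem_of_perp_singleton_subset hY hzY (Eq.le hz))

theorem gen_mem_parab {Y : Set V} {x : V} (hx : x ∈ Y) : gen G x ∈ parab G Y :=
  Subgroup.subset_closure ⟨x, hx, rfl⟩

theorem parab_le_iff {Y : Set V} {K : Subgroup (Raag G)} :
    parab G Y ≤ K ↔ ∀ x ∈ Y, gen G x ∈ K := by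
  rw [parab, Subgroup.closure_le, Set.image_subset_iff]
  rfl

theorem parab_mono {Y Z : Set V} (h : Y ⊆ Z) : parab G Y ≤ parab G Z :=
  Subgroup.closure_mono (Set.image_mono h)

theorem commute_gen_of_adj {x y : V} (h : G.Adj x y) : Commute (gen G x) (gen G y) := by
  rw [← commutatorElement_eq_one_iff_commute, commutatorElement_def]
  exact PresentedGroup.one_of_mem ⟨x, y, h, rfl⟩

noncomputable def retraction (Y : Set V) : Raag G →* Raag G :=
  PresentedGroup.toGroup (f := Y.mulIndicator (gen G)) <| by
    rintro _ ⟨x, y, h, rfl⟩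
    simp only [map_mul, map_inv, FreeGroup.lift_apply_of]
    rw [← commutatorElement_def, commutatorElement_eq_one_iff_commute]
    by_cases hx : x ∈ Y <;> by_cases hy : y ∈ Y <;> simp [hx, hy, commute_gen_of_adj h]

theorem retraction_gen (Y : Set V) (x : V) :
    retraction Y (gen G x) = Y.mulIndicator (gen G) x :=
  PresentedGroup.toGroup.of _

theorem retraction_mem_parab (Y : Set V) (g : Raag G) : retraction Y g ∈ parab G Y := by
  refine PresentedGroup.generated_by _ ((parab G Y).comap (retraction Y)) (fun x => ?_) g
  change retraction Y (gen G x) ∈ parab G Y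
  by_cases hx : x ∈ Y
  · rw [retraction_gen, Set.mulIndicator_of_mem hx]
    exact gen_mem_parab hx
  · rw [retraction_gen, Set.mulIndicator_of_notMem hx]
    exact one_mem _

theorem retraction_eq_self {Y : Set V} {g : Raag G} (hg : g ∈ parab G Y) :
    retraction Y g = g := by
  refine parab_le_iff (K := (retraction Y).eqLocus (MonoidHom.id _)) |>.2 (fun x hx => ?_) hg
  exact (retraction_gen Y x).trans (Set.mulIndicator_of_mem hx _)

theorem retraction_eq_one {Y : Set V} {g : Raag G} (hg : g ∈ parab G Yᶜ) :
    retraction Y g = 1 := by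
  refine parab_le_iff (K := (retraction Y).ker) |>.2 (fun x hx => ?_) hg
  exact (retraction_gen Y x).trans (Set.mulIndicator_of_notMem hx _)

theorem retraction_comp_eq_comp_retraction {φ : Raag G →* Raag G} {Y : Set V}
    (hY : ∀ x ∈ Y, φ (gen G x) ∈ parab G Y) (hYc : ∀ x ∉ Y, φ (gen G x) ∈ parab G Yᶜ) :
    (retraction Y).comp φ = φ.comp (retraction Y) := by
  refine PresentedGroup.ext fun x => ?_
  change retraction Y (φ (gen G x)) = φ (retraction Y (gen G x))
  by_cases hx : x ∈ Y
  · rw [retraction_eq_self (hY x hx), retraction_gen, Set.mulIndicator_of_mem hx]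
  · rw [retraction_eq_one (hYc x hx), retraction_gen, Set.mulIndicator_of_notMem hx, map_one]

theorem map_parab_eq {φ : MulAut (Raag G)} {Y : Set V}
    (h : ∀ x ∈ Y, φ (gen G x) ∈ parab G Y) (h' : ∀ x ∈ Y, φ.symm (gen G x) ∈ parab G Y) :
    (parab G Y).map φ.toMonoidHom = parab G Y :=
  le_antisymm (Subgroup.map_le_iff_le_comap.2 (parab_le_iff.2 h))
    (parab_le_iff.2 fun x hx => Subgroup.mem_map_equiv.2 (h' x hx))

theorem map_parab_eq_of_mapsTo_compl {φ : MulAut (Raag G)} {Y : Set V}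
    (hY : ∀ x ∈ Y, φ (gen G x) ∈ parab G Y) (hYc : ∀ x ∉ Y, φ (gen G x) ∈ parab G Yᶜ) :
    (parab G Y).map φ.toMonoidHom = parab G Y := by
  refine map_parab_eq hY fun x hx => ?_
  have hρ : φ (retraction Y (φ.symm (gen G x))) = gen G x := calc
    φ (retraction Y (φ.symm (gen G x))) = retraction Y (φ (φ.symm (gen G x))) :=
      (DFunLike.congr_fun (retraction_comp_eq_comp_retraction (φ := φ.toMonoidHom) hY hYc) _).symm
    _ = gen G x := by rw [φ.apply_symm_apply, retraction_gen, Set.mulIndicator_of_mem hx]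
  rw [← hρ, φ.symm_apply_apply]
  exact retraction_mem_parab Y _

theorem mem_StL_of_gen_mem_parab_clsPerp {φ : MulAut (Raag G)}
    (h : ∀ x, φ (gen G x) ∈ parab G (clsPerp G x)) : φ ∈ StL G := fun _ hY =>
  map_parab_eq_of_mapsTo_compl (fun x hx => parab_mono (clsPerp_subset hY hx) (h x))
    (fun x hx => parab_mono (clsPerp_subset_compl hY hx) (h x))

theorem Jset_subset_StL : Jset G ⊆ StL G := fun φ hφ =>
  mem_StL_of_gen_mem_parab_clsPerp fun x => by
    have hx : gen G x ∈ parab G (clsPerp G x) := gen_mem_parab (self_mem_clsPerp G x)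
    rcases hφ x with h | h <;> rw [h]
    exacts [hx, inv_mem hx]

theorem VPerp_subset_StL : VPerp G ⊆ StL G := fun _ hφ =>
  mem_StL_of_gen_mem_parab_clsPerp fun x => (hφ x).1

theorem TrPerp_subset_StL : TrPerp G ⊆ StL G := by
  rintro φ ⟨x, y, hne, hxy, hφx, hφ⟩ Y hY
  have hφx' : φ.symm (gen G x) = gen G x * (gen G y)⁻¹ := by
    rw [φ.symm_apply_eq, map_mul, map_inv, hφx, hφ y hne.symm, mul_inv_cancel_right]
  have hφ' : ∀ z ≠ x, φ.symm (gen G z) = gen G z :=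
    fun z hz => φ.symm_apply_eq.2 (hφ z hz).symm
  have hy : x ∈ Y → gen G y ∈ parab G Y :=
    fun hx => gen_mem_parab (mem_of_perp_singleton_subset hY hx hxy.subset)
  refine map_parab_eq (fun z hz => ?_) (fun z hz => ?_) <;> rcases eq_or_ne z x with rfl | hzx
  · rw [hφx]
    exact mul_mem (gen_mem_parab hz) (hy hz)
  · rw [hφ z hzx]
    exact gen_mem_parab hz
  · rw [hφx']
    exact mul_mem (gen_mem_parab hz) (inv_mem (hy hz))
  · rw [hφ' z hzx]
    exact gen_mem_parab hz

end Raag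

open Raag in
theorem J_VPerp_TrPerp_subset_StL_general {V : Type*} (G : SimpleGraph V) :
    Jset G ⊆ StL G ∧ VPerp G ⊆ StL G ∧ TrPerp G ⊆ StL G :=
  ⟨Jset_subset_StL, VPerp_subset_StL, TrPerp_subset_StL⟩

theorem J_VPerp_TrPerp_subset_StL {V : Type*} [Fintype V] (G : SimpleGraph V) :
    Jset G ⊆ StL G ∧ VPerp G ⊆ StL G ∧ TrPerp G ⊆ StL G :=
  J_VPerp_TrPerp_subset_StL_general G
end

section
/- The map π : St(L) → GL(|X|, ℤ) sending an automorphism φ to the matrix [φ] of exponents (x_i^φ = x₁^{a_{i,1}} ⋯ x_k^{a_{i,k}}) is an injective group homomorphism. -/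
/-!
Sending each generator `x` to the basis vector `eₓ` defines the abelianization
`Raag G → ℤ^V`, which maps `x^φ` to the row `x` of `[φ]`. On abelianizations any endomorphism
`ψ` acts as `v ↦ v [ψ]`, so the row `x` of `[φ ψ]` is (row `x` of `[φ]`) `[ψ]`. An automorphism
is determined by the images of the generators, and these are determined by its matrix.
-/

open Matrix

namespace Raag

variable {V : Type*} (G : SimpleGraph V)

theorem mulAut_ext {φ ψ : MulAut (Raag G)} (h : ∀ x, φ (gen G x) = ψ (gen G x)) : φ = ψ :=
  MulEquiv.toMonoidHom_injective (PresentedGroup.ext h)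

variable [DecidableEq V]

def abelianize : Raag G →* Multiplicative (V → ℤ) :=
  PresentedGroup.toGroup (rels := raagRels G) (f := fun v => .ofAdd (Pi.single v 1)) <| by
    rintro r ⟨x, y, -, rfl⟩
    simp only [map_mul, map_inv, FreeGroup.lift_apply_of]
    rw [← commutatorElement_def, commutatorElement_eq_one_iff_commute]
    exact Commute.all _ _

@[simp]
theorem abelianize_gen (v : V) :
    abelianize G (gen G v) = Multiplicative.ofAdd (Pi.single v 1) :=
  PresentedGroup.toGroup.of _

variable [Fintype V]

theorem abelianize_prod_zpow {n : ℕ} (e : Fin n ≃ V) (c : V → ℤ) :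
    abelianize G ((List.finRange n).map fun i => gen G (e i) ^ c (e i)).prod =
      Multiplicative.ofAdd c := by
  rw [map_list_prod, List.map_map, ← Fin.prod_univ_def]
  simp only [Function.comp_apply, map_zpow, abelianize_gen, ← ofAdd_zsmul, ← ofAdd_sum,
    ← Pi.single_smul', smul_eq_mul, mul_one]
  rw [Equiv.sum_comp e (fun v => Pi.single v (c v)), Finset.univ_sum_single]

theorem abelianize_apply_eq_vecMul {F : Type*} [FunLike F (Raag G) (Raag G)]
    [MonoidHomClass F (Raag G) (Raag G)] (ψ : F) (B : Matrix V V ℤ)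
    (hψ : ∀ y, abelianize G (ψ (gen G y)) = Multiplicative.ofAdd (B y)) (g : Raag G) :
    abelianize G (ψ g) = Multiplicative.ofAdd ((abelianize G g).toAdd ᵥ* B) := by
  let linear : Raag G →* Multiplicative (V → ℤ) :=
    (vecMulLinear B).toAddMonoidHom.toMultiplicative.comp (abelianize G)
  have : (abelianize G).comp (ψ : Raag G →* Raag G) = linear :=
    PresentedGroup.ext fun y => by
      change abelianize G (ψ (gen G y)) = linear (gen G y)
      simp [linear, hψ y, Matrix.row]
  exact DFunLike.congr_fun this g

end Raag

open Raag in
theorem matrix_rep_injective_hom_general {V : Type*} [Fintype V] (G : SimpleGraph V)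
    (n : ℕ) (e : Fin n ≃ V)  -- an enumeration x₁, …, x_k of the vertices
    (M : MulAut (Raag G) → Matrix V V ℤ)
    (hM : ∀ φ ∈ StL G, ∀ x : V,
      φ (gen G x) =
        (((List.finRange n).map fun i => gen G (e i) ^ M φ x (e i))).prod) :
    (∀ φ ∈ StL G, ∀ ψ ∈ StL G, φ.trans ψ ∈ StL G →
      M (φ.trans ψ) = M φ * M ψ) ∧
    (∀ φ ∈ StL G, ∀ ψ ∈ StL G, M φ = M ψ → φ = ψ) := by
  classical
  have hab : ∀ φ ∈ StL G, ∀ x, abelianize G (φ (gen G x)) = Multiplicative.ofAdd (M φ x) :=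
    fun φ hφ x => by rw [hM φ hφ x, abelianize_prod_zpow]
  refine ⟨fun φ hφ ψ hψ hφψ => ?_, fun φ hφ ψ hψ hMφψ =>
    mulAut_ext G fun x => by rw [hM φ hφ x, hM ψ hψ x, hMφψ]⟩
  funext x
  apply Multiplicative.ofAdd.injective
  rw [← hab _ hφψ x, MulEquiv.trans_apply, abelianize_apply_eq_vecMul G ψ (M ψ) (hab ψ hψ),
    hab φ hφ x, mul_apply_eq_vecMul]
  rfl

/-- The map `π : St(L) → GL(|X|,ℤ)`, `φ ↦ [φ]`, where
`x^φ = x₁^{a_{x,1}} ⋯ x_k^{a_{x,k}}` (with `x₁ ≺ ⋯ ≺ x_k` an enumeration of the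
vertices, and all factors appearing lying in the free abelian subgroup
`G(cl{x})`), is an injective group homomorphism. -/
theorem matrix_rep_injective_hom {V : Type*} [Fintype V] (G : SimpleGraph V)
    (n : ℕ) (e : Fin n ≃ V)  -- an enumeration x₁, …, x_k of the vertices
    (M : MulAut (Raag G) → Matrix V V ℤ)
    (hM : ∀ φ ∈ StL G, ∀ x : V,
      φ (gen G x) =
        (((List.finRange n).map fun i => gen G (e i) ^ M φ x (e i))).prod)
    (hM0 : ∀ φ ∈ StL G, ∀ x y : V, y ∉ cl G {x} → M φ x y = 0) :
    (∀ φ ∈ StL G, ∀ ψ ∈ StL G, φ.trans ψ ∈ StL G →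
      M (φ.trans ψ) = M φ * M ψ) ∧
    (∀ φ ∈ StL G, ∀ ψ ∈ StL G, M φ = M ψ → φ = ψ) :=
  matrix_rep_injective_hom_general G n e M hM
end

section
/- Every elementary conjugating automorphism α_C(x) of a right-angled Artin group G lies in the conjugate-stabiliser St^conj(L): for every closed set V, either G(V)^{α_C(x)} = G(V) or G(V)^{α_C(x)} = x^{-1} G(V) x. Key step: if V = T^⊥ is closed with x ∉ V, then all vertices of V \ x^⊥ lie in a single connected component of Γ minus x^⊥. -/
/-! The automorphism `α_C(x)` fixes the generators outside `C`, conjugates those in `C` by `x`, and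
commutes with every generator of `x^⊥`. So on `G(W)` it agrees with conjugation by `x` when
`W ⊆ x^⊥ ∪ C`, and with the identity when `W` misses `C`. Otherwise `W` contains some `u ∈ C` and
some `v ∉ x^⊥ ∪ C`; a vertex of `W^⊥` outside `x^⊥` would be within distance one of both and so
join `u`'s component to `v`. Hence `W^⊥ ⊆ x^⊥`, so `x ∈ W^⊥⊥ = W`, and `G(W)` is invariant because
each generator is sent to itself or to its conjugate by `x ∈ G(W)`. -/

lemma mem_perp_singleton {V : Type*} {G : SimpleGraph V} {u x : V} :
    u ∈ perp G {x} ↔ u = x ∨ G.Adj u x := by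
  simp [perp]

lemma gen_mul_gen_of_adj {V : Type*} (G : SimpleGraph V) {a b : V} (h : G.Adj a b) :
    gen G a * gen G b = gen G b * gen G a := by
  have hrel : gen G a * gen G b * (gen G a)⁻¹ * (gen G b)⁻¹ = 1 :=
    (QuotientGroup.eq_one_iff _).mpr (Subgroup.subset_normalClosure ⟨a, b, h, rfl⟩)
  calc gen G a * gen G b
      = (gen G a * gen G b * (gen G a)⁻¹ * (gen G b)⁻¹) * (gen G b * gen G a) := by group
    _ = gen G b * gen G a := by rw [hrel, one_mul]

lemma commute_gen_of_mem_perp {V : Type*} (G : SimpleGraph V) {x y : V}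
    (hy : y ∈ perp G {x}) : Commute (gen G x) (gen G y) := by
  rcases mem_perp_singleton.1 hy with rfl | h
  · exact Commute.refl _
  · exact gen_mul_gen_of_adj G h.symm

namespace Subgroup

variable {G : Type*} [Group G]

lemma map_closure_eq_map_closure_of_eqOn {N : Type*} [Group N] {f g : G →* N} {s : Set G}
    (h : Set.EqOn f g s) : (closure s).map f = (closure s).map g := by
  rw [MonoidHom.map_closure, MonoidHom.map_closure, h.image_eq]

lemma map_closure_eq_self_of_conj (f : G →* G) {s : Set G} {g : G} (hg : g ∈ s)
    (hfg : f g = g) (hf : ∀ a ∈ s, f a = a ∨ f a = g⁻¹ * a * g) :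
    (closure s).map f = closure s := by
  rw [MonoidHom.map_closure]
  apply le_antisymm
  · rw [closure_le]
    rintro _ ⟨a, ha, rfl⟩
    have hg' : g ∈ closure s := subset_closure hg
    rcases hf a ha with h | h <;> rw [h]
    · exact subset_closure ha
    · exact mul_mem (mul_mem (inv_mem hg') (subset_closure ha)) hg'
  · rw [closure_le]
    intro a ha
    have hg' : g ∈ closure (f '' s) := subset_closure ⟨g, hg, hfg⟩
    have hfa : f a ∈ closure (f '' s) := subset_closure ⟨a, ha, rfl⟩
    rcases hf a ha with h | h
    · exact h ▸ hfa
    · have : a = g * f a * g⁻¹ := by rw [h]; group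
      rw [this]
      exact mul_mem (mul_mem hg' hfa) (inv_mem hg')

end Subgroup

lemma mem_cl_of_straddles_component {V : Type*} {G : SimpleGraph V} {x : V} {C : Set V}
    (hC : ∀ u ∈ C, ∀ v ∈ (perp G {x})ᶜ, G.Adj u v → v ∈ C) {W : Set V} {u v : V}
    (huW : u ∈ W) (hvW : v ∈ W) (hu : u ∈ C) (hv : v ∉ perp G {x}) (hvC : v ∉ C) :
    x ∈ cl G W := by
  intro t ht
  by_contra hxt
  have htx : t ∉ perp G {x} := by
    rw [mem_perp_singleton]
    rintro (rfl | h)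
    exacts [hxt (Or.inl rfl), hxt (Or.inr h.symm)]
  have htC : t ∈ C := by
    rcases ht u huW with rfl | h
    exacts [hu, hC u hu t htx h.symm]
  rcases ht v hvW with rfl | h
  exacts [hvC htC, hvC (hC t htC v hv h)]

theorem elementary_conjugating_in_StConj_general {V : Type*}
    (G : SimpleGraph V) (x : V) (C : Set V)
    -- `C` is a connected component of `Γ` with the vertices `x^⊥` removed:
    (hC1 : C ⊆ (perp G {x})ᶜ)
    (hC2 : ∀ u ∈ C, ∀ v ∈ (perp G {x})ᶜ, G.Adj u v → v ∈ C)
    -- `φ = α_C(x)` conjugates the generators in `C` by `x` and fixes the rest: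
    (φ : MulAut (Raag G))
    (hφ1 : ∀ y ∈ C, φ (gen G y) = (gen G x)⁻¹ * gen G y * gen G x)
    (hφ2 : ∀ y : V, y ∉ C → φ (gen G y) = gen G y) :
    ∀ W : Set V, W = cl G W →
      (parab G W).map φ.toMonoidHom = parab G W ∨
      (parab G W).map φ.toMonoidHom =
        (parab G W).map (MulAut.conj (gen G x)⁻¹).toMonoidHom := by
  intro W hW
  have hxC : x ∉ C := fun hx => hC1 hx (mem_perp_singleton.2 (Or.inl rfl))
  by_cases hWC : ∃ u ∈ W, u ∈ C
  · by_cases hWout : ∃ v ∈ W, v ∉ C ∧ v ∉ perp G {x}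
    · obtain ⟨u, huW, huC⟩ := hWC
      obtain ⟨v, hvW, hvC, hv⟩ := hWout
      have hxW : x ∈ W := hW ▸ mem_cl_of_straddles_component hC2 huW hvW huC hv hvC
      left
      refine Subgroup.map_closure_eq_self_of_conj _ ⟨x, hxW, rfl⟩ (hφ2 x hxC) ?_
      rintro _ ⟨y, -, rfl⟩
      by_cases hy : y ∈ C
      exacts [Or.inr (hφ1 y hy), Or.inl (hφ2 y hy)]
    · push Not at hWout
      right
      refine Subgroup.map_closure_eq_map_closure_of_eqOn ?_
      rintro _ ⟨y, hyW, rfl⟩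
      by_cases hy : y ∈ C
      · simpa using hφ1 y hy
      · simp only [MulEquiv.coe_toMonoidHom, MulAut.conj_apply, inv_inv, hφ2 y hy]
        rw [mul_assoc, ← (commute_gen_of_mem_perp G (hWout y hyW hy)).eq, inv_mul_cancel_left]
  · push Not at hWC
    left
    refine (Subgroup.map_closure_eq_map_closure_of_eqOn (g := MonoidHom.id _) ?_).trans
      (parab G W).map_id
    rintro _ ⟨y, hyW, rfl⟩
    exact hφ2 y (hWC y hyW)

/-- Every elementary conjugating automorphism `α_C(x)` lies in the
conjugate-stabiliser `St^conj(L)`: for every closed set `W`, either it fixes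
`G(W)` or it maps `G(W)` to `x⁻¹ G(W) x`. -/
theorem elementary_conjugating_in_StConj {V : Type*} [Fintype V]
    (G : SimpleGraph V) (x : V) (C : Set V)
    -- `C` is a connected component of `Γ` with the vertices `x^⊥` removed:
    (hC1 : C ⊆ (perp G {x})ᶜ)
    (hC2 : ∀ u ∈ C, ∀ v ∈ (perp G {x})ᶜ, G.Adj u v → v ∈ C)
    (hC3 : ∀ u v : ((perp G {x})ᶜ : Set V), (u : V) ∈ C → (v : V) ∈ C →
      (G.induce ((perp G {x})ᶜ)).Reachable u v)
    -- `φ = α_C(x)` conjugates the generators in `C` by `x` and fixes the rest: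
    (φ : MulAut (Raag G))
    (hφ1 : ∀ y ∈ C, φ (gen G y) = (gen G x)⁻¹ * gen G y * gen G x)
    (hφ2 : ∀ y : V, y ∉ C → φ (gen G y) = gen G y) :
    ∀ W : Set V, W = cl G W →
      (parab G W).map φ.toMonoidHom = parab G W ∨
      (parab G W).map φ.toMonoidHom =
        (parab G W).map (MulAut.conj (gen G x)⁻¹).toMonoidHom :=
  elementary_conjugating_in_StConj_general G x C hC1 hC2 φ hφ1 hφ2
end
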